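/- If t ≥ 2 and some n_j ≥ 2, then Γ(Mat(n,m,F_q)) is not 2-partially distance-regular: there exist vertices v, v' at distance 2 from the zero tuple O with c_2(v,O) = 2 but c_2(v',O) ≥ 3, where c_2(x,O) is the number of common neighbors of x and O. -/

import Mathlib

private lemma rank_neg' {F : Type*} [Field F] {a b : ℕ} (A : Matrix (Fin a) (Fin b) F) :
    (-A).rank = A.rank := by
  have h : LinearMap.range (-A).mulVecLin = LinearMap.range A.mulVecLin := by
    ext x
    simp only [LinearMap.mem_range, Matrix.mulVecLin_apply, Matrix.neg_mulVec]
    constructor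
    · rintro ⟨v, hv⟩; exact ⟨-v, by simp [Matrix.mulVec_neg, hv]⟩
    · rintro ⟨v, hv⟩; exact ⟨-v, by simp [Matrix.mulVec_neg, hv]⟩
  rw [Matrix.rank, Matrix.rank, h]

/-- The sum-rank of a tuple of matrices. -/
noncomputable def srk {F : Type*} [Field F] {t : ℕ} {n m : Fin t → ℕ}
    (X : ∀ i, Matrix (Fin (n i)) (Fin (m i)) F) : ℕ :=
  ∑ i, (X i).rank

/-- The sum-rank-metric graph. -/
def srGraph (F : Type*) [Field F] {t : ℕ} (n m : Fin t → ℕ) :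
    SimpleGraph (∀ i : Fin t, Matrix (Fin (n i)) (Fin (m i)) F) where
  Adj X Y := srk (fun i => X i - Y i) = 1
  symm := by
    constructor
    intro X Y h
    unfold srk at h ⊢
    calc ∑ i, (Y i - X i).rank
        = ∑ i, (X i - Y i).rank := by
          refine Finset.sum_congr rfl fun i _ => ?_
          rw [show Y i - X i = -(X i - Y i) by abel, rank_neg']
      _ = 1 := h
  loopless := by
    constructor
    intro X h
    unfold srk at h
    simp at h

/-!
A neighbour of the zero tuple `O` has exactly one nonzero block, and that block has rank one.
For `v` with rank-one blocks `A` at `j` and `B` at `k ≠ j`, a common neighbour of `v` and `O`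
must therefore cancel one of the two blocks of `v` exactly, so it is `Pi.single j A` or
`Pi.single k B`. For `v'` with the single rank-two block `M = E₀₀ + E₁₁`, the three rank-one
matrices `E₀₀`, `E₁₁` and `(e₀ + e₁) e₀ᵀ` all differ from `M` by a rank-one matrix, which gives
three common neighbours.
-/

theorem SimpleGraph.dist_eq_two_iff {V : Type*} {G : SimpleGraph V} {u v : V} :
    G.dist u v = 2 ↔ u ≠ v ∧ ¬G.Adj u v ∧ (G.commonNeighbors u v).Nonempty := by
  rw [SimpleGraph.dist, ENat.toNat_eq_iff two_ne_zero]
  exact SimpleGraph.edist_eq_two_iff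

namespace Matrix

variable {F : Type*} [Field F] {m n : Type*}

theorem rank_eq_zero_iff [Fintype n] {A : Matrix m n F} : A.rank = 0 ↔ A = 0 := by
  classical
  refine ⟨fun h => ?_, fun h => h ▸ rank_zero⟩
  rw [rank, Submodule.finrank_eq_zero, LinearMap.range_eq_bot] at h
  ext i k
  simpa using congrFun (LinearMap.congr_fun h (Pi.single k 1)) i

theorem rank_vecMulVec_of_ne_zero [Fintype n] {u : m → F} {v : n → F} (hu : u ≠ 0)
    (hv : v ≠ 0) : (vecMulVec u v).rank = 1 := by
  have hne : (vecMulVec u v).rank ≠ 0 := by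
    obtain ⟨i, hi⟩ := Function.ne_iff.mp hu
    obtain ⟨k, hk⟩ := Function.ne_iff.mp hv
    rw [Ne, rank_eq_zero_iff]
    intro h
    exact mul_ne_zero hi hk (by simpa [vecMulVec_apply] using congrFun (congrFun h i) k)
  exact (rank_vecMulVec_le u v).antisymm (Nat.one_le_iff_ne_zero.mpr hne)

variable [DecidableEq m] [DecidableEq n]

theorem rank_single_one [Fintype n] (i : m) (k : n) : (single i k (1 : F)).rank = 1 := by
  rw [single_eq_single_vecMulVec_single]
  exact rank_vecMulVec_of_ne_zero (by simp) (by simp)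

theorem two_le_rank_single_add_single [Fintype n] {i₀ i₁ : m} {k₀ k₁ : n} (hi : i₀ ≠ i₁)
    (hk : k₀ ≠ k₁) : 2 ≤ (single i₀ k₀ (1 : F) + single i₁ k₁ 1).rank := by
  set M := single i₀ k₀ (1 : F) + single i₁ k₁ 1
  have hsub : M.submatrix ![i₀, i₁] ![k₀, k₁] = 1 := by
    ext a b
    fin_cases a <;> fin_cases b <;> simp [M, single, hi, hk, hi.symm, hk.symm]
  calc 2 = (1 : Matrix (Fin 2) (Fin 2) F).rank := by simp
    _ = (M.submatrix ![i₀, i₁] ![k₀, k₁]).rank := by rw [hsub]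
    _ ≤ M.rank := rank_submatrix_le M _ _

theorem single_add_single_sub_vecMulVec (i₀ i₁ : m) (k₀ k₁ : n) :
    single i₀ k₀ (1 : F) + single i₁ k₁ 1 -
        vecMulVec (Pi.single i₀ 1 + Pi.single i₁ 1) (Pi.single k₀ 1) =
      vecMulVec (Pi.single i₁ 1) (Pi.single k₁ 1 - Pi.single k₀ 1) := by
  simp only [single_eq_single_vecMulVec_single, add_vecMulVec, vecMulVec_sub]
  abel

theorem two_lt_ncard_rank_eq_one_and_rank_sub_eq_one [Finite F] [Fintype m] [Fintype n]
    {i₀ i₁ : m} {k₀ k₁ : n} (hi : i₀ ≠ i₁) (hk : k₀ ≠ k₁) :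
    2 < {N : Matrix m n F |
      N.rank = 1 ∧ (single i₀ k₀ 1 + single i₁ k₁ 1 - N).rank = 1}.ncard := by
  have hsum : (Pi.single i₀ 1 + Pi.single i₁ 1 : m → F) ≠ 0 := fun h => by
    simpa [hi.symm] using congrFun h i₀
  have hdiff : (Pi.single k₁ 1 - Pi.single k₀ 1 : n → F) ≠ 0 := fun h => by
    simpa [hk.symm] using congrFun h k₁
  refine (Set.two_lt_ncard_iff).mpr ⟨single i₀ k₀ 1, single i₁ k₁ 1,
    vecMulVec (Pi.single i₀ 1 + Pi.single i₁ 1) (Pi.single k₀ 1), ?_, ?_, ?_, ?_, ?_, ?_⟩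
  · rw [Set.mem_ofPred_eq, add_sub_cancel_left]
    exact ⟨rank_single_one i₀ k₀, rank_single_one i₁ k₁⟩
  · rw [Set.mem_ofPred_eq, add_sub_cancel_right]
    exact ⟨rank_single_one i₁ k₁, rank_single_one i₀ k₀⟩
  · rw [Set.mem_ofPred_eq, single_add_single_sub_vecMulVec]
    exact ⟨rank_vecMulVec_of_ne_zero hsum (by simp),
      rank_vecMulVec_of_ne_zero (by simp) hdiff⟩
  · intro h
    simpa [hi.symm] using congrFun (congrFun h i₀) k₀
  · intro h
    simpa [vecMulVec_apply, hi] using congrFun (congrFun h i₁) k₀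
  · intro h
    simpa [vecMulVec_apply, hi, hk.symm] using congrFun (congrFun h i₀) k₀

end Matrix

section SumRank

variable {F : Type*} [Field F] {t : ℕ} {n m : Fin t → ℕ}

theorem srk_single (j : Fin t) (A : Matrix (Fin (n j)) (Fin (m j)) F) :
    srk (Pi.single j A : ∀ i, Matrix (Fin (n i)) (Fin (m i)) F) = A.rank := by
  rw [srk, Fintype.sum_eq_single j fun i hi => by rw [Pi.single_eq_of_ne hi, Matrix.rank_zero],
    Pi.single_eq_same]

theorem srk_neg (X : ∀ i, Matrix (Fin (n i)) (Fin (m i)) F) : srk (-X) = srk X := by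
  simp only [srk, Pi.neg_apply, rank_neg']

theorem rank_add_rank_le_srk (X : ∀ i, Matrix (Fin (n i)) (Fin (m i)) F) {j k : Fin t}
    (hjk : j ≠ k) : (X j).rank + (X k).rank ≤ srk X :=
  Finset.add_le_sum (f := fun i => (X i).rank) (fun _ _ => Nat.zero_le _) (Finset.mem_univ j)
    (Finset.mem_univ k) hjk

theorem exists_eq_single_of_srk_eq_one {X : ∀ i, Matrix (Fin (n i)) (Fin (m i)) F}
    (hX : srk X = 1) : ∃ i N, N.rank = 1 ∧ X = Pi.single i N := by
  obtain ⟨i, -, hi⟩ := Finset.exists_ne_zero_of_sum_ne_zero (hX.trans_ne one_ne_zero)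
  have hle : (X i).rank ≤ 1 :=
    hX ▸ Finset.single_le_sum (f := fun i => (X i).rank) (fun _ _ => Nat.zero_le _)
      (Finset.mem_univ i)
  refine ⟨i, X i, by omega, funext fun k => ?_⟩
  rcases eq_or_ne k i with rfl | hki
  · rw [Pi.single_eq_same]
  · have := rank_add_rank_le_srk X hki.symm
    rw [Pi.single_eq_of_ne hki, ← Matrix.rank_eq_zero_iff]
    omega

open SimpleGraph

theorem srGraph_adj_iff {X Y : ∀ i, Matrix (Fin (n i)) (Fin (m i)) F} :
    (srGraph F n m).Adj X Y ↔ srk (X - Y) = 1 :=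
  Iff.rfl

theorem srGraph_adj_zero_left {X : ∀ i, Matrix (Fin (n i)) (Fin (m i)) F} :
    (srGraph F n m).Adj 0 X ↔ srk X = 1 := by
  rw [srGraph_adj_iff, zero_sub, srk_neg]

theorem srGraph_adj_zero_single {j : Fin t} {N : Matrix (Fin (n j)) (Fin (m j)) F} :
    (srGraph F n m).Adj 0 (Pi.single j N) ↔ N.rank = 1 := by
  rw [srGraph_adj_zero_left, srk_single]

theorem srGraph_adj_single_single {j : Fin t} {M N : Matrix (Fin (n j)) (Fin (m j)) F} :
    (srGraph F n m).Adj (Pi.single j M) (Pi.single j N) ↔ (M - N).rank = 1 := by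
  rw [srGraph_adj_iff, ← Pi.single_sub, srk_single]

theorem srGraph_dist_zero_eq_two {X : ∀ i, Matrix (Fin (n i)) (Fin (m i)) F} (hX : 2 ≤ srk X)
    (hcn : ((srGraph F n m).commonNeighbors X 0).Nonempty) : (srGraph F n m).dist 0 X = 2 := by
  refine dist_eq_two_iff.mpr ⟨?_, ?_, commonNeighbors_symm (srGraph F n m) X 0 ▸ hcn⟩
  · rintro rfl
    simp [srk] at hX
  · rw [srGraph_adj_zero_left]
    omega

theorem srGraph_commonNeighbors_single_add_single_zero {j k : Fin t} (hjk : j ≠ k)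
    {A : Matrix (Fin (n j)) (Fin (m j)) F} {B : Matrix (Fin (n k)) (Fin (m k)) F}
    (hA : A.rank = 1) (hB : B.rank = 1) :
    (srGraph F n m).commonNeighbors (Pi.single j A + Pi.single k B) 0 =
      {Pi.single j A, Pi.single k B} := by
  ext w
  rw [mem_commonNeighbors, Set.mem_insert_iff, Set.mem_singleton_iff]
  constructor
  · rintro ⟨hvw, h0w⟩
    obtain ⟨i, N, -, rfl⟩ := exists_eq_single_of_srk_eq_one (srGraph_adj_zero_left.mp h0w)
    have key := srGraph_adj_iff.mp hvw ▸ rank_add_rank_le_srk _ hjk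
    rw [Pi.sub_apply, Pi.sub_apply, Pi.add_apply, Pi.add_apply, Pi.single_eq_same,
      Pi.single_eq_same, Pi.single_eq_of_ne hjk, Pi.single_eq_of_ne hjk.symm, add_zero,
      zero_add] at key
    rcases eq_or_ne i j with rfl | hij
    · rw [Pi.single_eq_same, Pi.single_eq_of_ne hjk.symm, sub_zero, hB] at key
      left
      rw [sub_eq_zero.mp (Matrix.rank_eq_zero_iff.mp (show (A - N).rank = 0 by omega))]
    rcases eq_or_ne i k with rfl | hik
    · rw [Pi.single_eq_same, Pi.single_eq_of_ne hjk, sub_zero, hA] at key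
      right
      rw [sub_eq_zero.mp (Matrix.rank_eq_zero_iff.mp (show (B - N).rank = 0 by omega))]
    · rw [Pi.single_eq_of_ne hij.symm, Pi.single_eq_of_ne hik.symm, sub_zero, sub_zero, hA,
        hB] at key
      omega
  · rintro (rfl | rfl)
    · exact ⟨by rw [srGraph_adj_iff, add_sub_cancel_left, srk_single, hB],
        srGraph_adj_zero_single.mpr hA⟩
    · exact ⟨by rw [srGraph_adj_iff, add_sub_cancel_right, srk_single, hA],
        srGraph_adj_zero_single.mpr hB⟩

theorem srGraph_ncard_commonNeighbors_single_add_single_zero {j k : Fin t} (hjk : j ≠ k)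
    {A : Matrix (Fin (n j)) (Fin (m j)) F} {B : Matrix (Fin (n k)) (Fin (m k)) F}
    (hA : A.rank = 1) (hB : B.rank = 1) :
    ((srGraph F n m).commonNeighbors (Pi.single j A + Pi.single k B) 0).ncard = 2 := by
  refine (srGraph_commonNeighbors_single_add_single_zero hjk hA hB ▸ Set.ncard_pair) fun h => ?_
  have hA0 := congrFun h j
  rw [Pi.single_eq_same, Pi.single_eq_of_ne hjk] at hA0
  simp [hA0] at hA

theorem ncard_rank_eq_one_and_rank_sub_eq_one_le_ncard_srGraph_commonNeighbors [Finite F]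
    (j : Fin t) (M : Matrix (Fin (n j)) (Fin (m j)) F) :
    {N | N.rank = 1 ∧ (M - N).rank = 1}.ncard ≤
      ((srGraph F n m).commonNeighbors (Pi.single j M) 0).ncard := by
  rw [← Set.ncard_image_of_injective _
    (Pi.single_injective (M := fun i => Matrix (Fin (n i)) (Fin (m i)) F) j)]
  refine Set.ncard_le_ncard ?_
  rintro _ ⟨N, ⟨hN, hMN⟩, rfl⟩
  exact (mem_commonNeighbors _).mpr
    ⟨srGraph_adj_single_single.mpr hMN, srGraph_adj_zero_single.mpr hN⟩

end SumRank

/-- If $t \ge 2$ and some $n_j \ge 2$, the sum-rank-metric graph is not 2-partially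
distance-regular: there are vertices $v, v'$ at distance 2 from the zero tuple with
$c_2(v, O) = 2$ but $c_2(v', O) \ge 3$. -/
theorem srGraph_not_two_partially_distanceRegular (F : Type*) [Field F] [Fintype F]
    (t : ℕ) (ht : 2 ≤ t) (n m : Fin t → ℕ) (hn : ∀ i, 0 < n i) (hm : ∀ i, 0 < m i)
    (j : Fin t) (hnj : 2 ≤ n j) (hmj : 2 ≤ m j) :
    ∃ v v' : ∀ i : Fin t, Matrix (Fin (n i)) (Fin (m i)) F,
      (srGraph F n m).dist 0 v = 2 ∧
      (srGraph F n m).dist 0 v' = 2 ∧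
      Nat.card {w // (srGraph F n m).Adj v w ∧ (srGraph F n m).Adj 0 w} = 2 ∧
      3 ≤ Nat.card {w // (srGraph F n m).Adj v' w ∧ (srGraph F n m).Adj 0 w} := by
  have : Nontrivial (Fin t) := Fin.nontrivial_iff_two_le.mpr ht
  obtain ⟨k, hkj⟩ := exists_ne j
  have hi : (⟨0, by omega⟩ : Fin (n j)) ≠ ⟨1, hnj⟩ := by simp
  have hk : (⟨0, by omega⟩ : Fin (m j)) ≠ ⟨1, hmj⟩ := by simp
  set A : Matrix (Fin (n j)) (Fin (m j)) F := Matrix.single ⟨0, by omega⟩ ⟨0, by omega⟩ 1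
  set B : Matrix (Fin (n k)) (Fin (m k)) F := Matrix.single ⟨0, hn k⟩ ⟨0, hm k⟩ 1
  set M : Matrix (Fin (n j)) (Fin (m j)) F := A + Matrix.single ⟨1, hnj⟩ ⟨1, hmj⟩ 1
  set v : ∀ i, Matrix (Fin (n i)) (Fin (m i)) F := Pi.single j A + Pi.single k B
  have hA : A.rank = 1 := Matrix.rank_single_one _ _
  have hB : B.rank = 1 := Matrix.rank_single_one _ _
  have hv : ((srGraph F n m).commonNeighbors v 0).ncard = 2 :=
    srGraph_ncard_commonNeighbors_single_add_single_zero hkj.symm hA hB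
  have hv' : 2 < ((srGraph F n m).commonNeighbors (Pi.single j M) 0).ncard :=
    (Matrix.two_lt_ncard_rank_eq_one_and_rank_sub_eq_one hi hk).trans_le
      (ncard_rank_eq_one_and_rank_sub_eq_one_le_ncard_srGraph_commonNeighbors j M)
  refine ⟨v, Pi.single j M, srGraph_dist_zero_eq_two ?_ (Set.nonempty_of_ncard_ne_zero (by omega)),
    srGraph_dist_zero_eq_two ?_ (Set.nonempty_of_ncard_ne_zero (by omega)),
    (Nat.card_coe_set_eq _).trans hv, hv'.trans_eq (Nat.card_coe_set_eq _).symm⟩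
  · calc 2 = (v j).rank + (v k).rank := by
          simp [v, Pi.single_eq_of_ne hkj, Pi.single_eq_of_ne hkj.symm, hA, hB]
      _ ≤ srk v := rank_add_rank_le_srk v hkj.symm
  · rw [srk_single]
    exact Matrix.two_le_rank_single_add_single hi hk
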